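/- arXiv:1711.01085 — 5 statements merged into one kernel-verified Lean document; each statement's English description precedes it below -/
import Mathlib

section
/- Let K ⊆ ℝⁿ be a convex set and x : [0, T] → K an absolutely continuous path. Then for almost every t, the derivative x'(t) lies in the orthogonal complement of the normal cone N_K(x(t)); that is, ⟨y, x'(t)⟩ = 0 for every y ∈ N_K(x(t)). -/
open MeasureTheory Filter Topology

/-!
If `y` lies in the normal cone of `K` at `x t`, then `s ↦ ⟪y, x s⟫` attains a local maximum at
every interior time `t` (the path stays in `K` near `t`), so its derivative `⟪y, x' t⟫` vanishes
wherever `x` is differentiable. The endpoints of `[0, T]` form a null set.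
-/

theorem inner_hasDerivAt_eq_zero_of_mem_normalCone {E : Type*} [NormedAddCommGroup E]
    [InnerProductSpace ℝ E] {K : Set E} {x : ℝ → E} {v y : E} {t : ℝ}
    (hd : HasDerivAt x v t) (hK : ∀ᶠ s in 𝓝 t, x s ∈ K)
    (hy : ∀ z ∈ K, inner ℝ y (z - x t) ≤ (0 : ℝ)) :
    inner ℝ y v = (0 : ℝ) := by
  have hmax : IsLocalMax (fun s => inner ℝ y (x s)) t := by
    filter_upwards [hK] with s hs
    have := hy (x s) hs
    rw [inner_sub_right] at this
    linarith
  exact hmax.hasDerivAt_eq_zero ((innerSL ℝ y).hasFDerivAt.comp_hasDerivAt t hd)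

theorem ae_restrict_Icc_mem_Ioo (a b : ℝ) :
    ∀ᵐ t ∂(volume.restrict (Set.Icc a b)), t ∈ Set.Ioo a b := by
  rw [← Measure.restrict_congr_set Ioo_ae_eq_Icc]
  exact ae_restrict_mem measurableSet_Ioo

theorem stmt_2_general (n : ℕ) (T : ℝ)
    (K : Set (EuclideanSpace ℝ (Fin n)))
    (x x' : ℝ → EuclideanSpace ℝ (Fin n))
    (hmem : ∀ t ∈ Set.Icc (0 : ℝ) T, x t ∈ K)
    (hderiv : ∀ᵐ t ∂(volume.restrict (Set.Icc (0 : ℝ) T)), HasDerivAt x (x' t) t) :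
    ∀ᵐ t ∂(volume.restrict (Set.Icc (0 : ℝ) T)),
      ∀ y : EuclideanSpace ℝ (Fin n),
        (∀ z ∈ K, inner ℝ y (z - x t) ≤ (0 : ℝ)) → inner ℝ y (x' t) = (0 : ℝ) := by
  filter_upwards [hderiv, ae_restrict_Icc_mem_Ioo 0 T] with t hd ht y hy
  have hK : ∀ᶠ s in 𝓝 t, x s ∈ K :=
    eventually_of_mem (Icc_mem_nhds ht.1 ht.2) hmem
  exact inner_hasDerivAt_eq_zero_of_mem_normalCone hd hK hy

/-- If `x : [0,T] → K` is an absolutely continuous path in a convex set `K ⊆ ℝⁿ`,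
then for almost every `t` the derivative `x'(t)` is orthogonal to the normal cone
`N_K(x(t))`. -/
theorem stmt_2 (n : ℕ) (T : ℝ) (hT : 0 < T)
    (K : Set (EuclideanSpace ℝ (Fin n))) (hK : Convex ℝ K)
    (x x' : ℝ → EuclideanSpace ℝ (Fin n))
    (hmem : ∀ t ∈ Set.Icc (0 : ℝ) T, x t ∈ K)
    (hint : ∀ t ∈ Set.Icc (0 : ℝ) T, IntervalIntegrable x' volume 0 t)
    (hAC : ∀ t ∈ Set.Icc (0 : ℝ) T, x t = x 0 + ∫ s in (0 : ℝ)..t, x' s)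
    (hderiv : ∀ᵐ t ∂(volume.restrict (Set.Icc (0 : ℝ) T)), HasDerivAt x (x' t) t) :
    ∀ᵐ t ∂(volume.restrict (Set.Icc (0 : ℝ) T)),
      ∀ y : EuclideanSpace ℝ (Fin n),
        (∀ z ∈ K, inner ℝ y (z - x t) ≤ (0 : ℝ)) → inner ℝ y (x' t) = (0 : ℝ) :=
  stmt_2_general n T K x x' hmem hderiv
end

section
/- Fix ε ∈ (0,1) and define σ : ℝ₊ → ℝ₊ by σ(s) = ℓ for s ∈ [ℓ, ℓ+ε] for every nonnegative integer ℓ, extended affinely on each interval [ℓ+ε, ℓ+1] (so σ(ℓ+ε+u) = ℓ + u/(1-ε) for u ∈ [0, 1-ε]). Then σ is superadditive: σ(a + b) ≥ σ(a) + σ(b) for all a, b ≥ 0. -/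
/-!
Writing `s = ⌊s⌋ + x` with `x = fract s ∈ [0, 1)`, we have `σ(s) = ⌊s⌋ + r(x)` for the ramp
`r(x) = max 0 (x - ε) / (1 - ε)`, and `σ(s + k) = σ(s) + k` for integers `k`. So it suffices to
compare `r(x) + r(y)` with `σ(x + y)` for `x, y ∈ [0, 1)`. If `x + y < 1` this is superadditivity
of the ramp, which holds because `ε ≥ 0`. If `x + y ≥ 1`, then `σ(x + y) = 1 + r(x + y - 1)`; this
dominates `r(x) + r(y)` because `r` rises by at most `1` on `[0, 1)`, and the two are equal when
both `x` and `y` exceed `ε`.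
-/

/-- The truncation function `σ`: equal to `ℓ` on `[ℓ, ℓ+ε]` for every `ℓ ∈ ℤ₊`,
extended affinely (with slope `1/(1-ε)`) on `[ℓ+ε, ℓ+1]`. -/
noncomputable def truncFn (ε s : ℝ) : ℝ :=
  ⌊s⌋ + max 0 (s - ⌊s⌋ - ε) / (1 - ε)

lemma truncFn_add_intCast (ε s : ℝ) (k : ℤ) : truncFn ε (s + k) = truncFn ε s + k := by
  simp only [truncFn, Int.floor_add_intCast, Int.cast_add]
  ring_nf

lemma truncFn_of_mem_Ico (ε : ℝ) {x : ℝ} (hx : x ∈ Set.Ico 0 1) :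
    truncFn ε x = max 0 (x - ε) / (1 - ε) := by
  simp [truncFn, Int.floor_eq_zero_iff.mpr hx]

lemma max_zero_sub_add_max_zero_sub_le {ε x y : ℝ} (hε : 0 ≤ ε) (hx : 0 ≤ x) (hy : 0 ≤ y) :
    max 0 (x - ε) + max 0 (y - ε) ≤ max 0 (x + y - ε) := by
  rcases le_total x ε with hxε | hxε <;> rcases le_total y ε with hyε | hyε <;>
    simp only [max_eq_left, max_eq_right, sub_nonpos, sub_nonneg, hxε, hyε] <;>
    simp only [le_max_iff] <;> first | (left; linarith) | (right; linarith)

lemma max_zero_sub_add_max_zero_sub_le_of_lt_one {ε x y : ℝ} (hε : ε ≤ 1) (hx : x < 1)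
    (hy : y < 1) :
    max 0 (x - ε) + max 0 (y - ε) ≤ max 0 (x + y - 1 - ε) + (1 - ε) := by
  rcases le_total x ε with hxε | hxε <;> rcases le_total y ε with hyε | hyε <;>
    simp only [max_eq_left, max_eq_right, sub_nonpos, sub_nonneg, hxε, hyε] <;>
    linarith [le_max_left 0 (x + y - 1 - ε), le_max_right 0 (x + y - 1 - ε)]

lemma truncFn_add_le_of_mem_Ico {ε x y : ℝ} (hε₀ : 0 ≤ ε) (hε₁ : ε < 1)
    (hx : x ∈ Set.Ico 0 1) (hy : y ∈ Set.Ico 0 1) :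
    truncFn ε x + truncFn ε y ≤ truncFn ε (x + y) := by
  have hpos : 0 < 1 - ε := sub_pos.mpr hε₁
  rw [truncFn_of_mem_Ico ε hx, truncFn_of_mem_Ico ε hy, ← add_div]
  rcases lt_or_ge (x + y) 1 with hxy | hxy
  · rw [truncFn_of_mem_Ico ε ⟨add_nonneg hx.1 hy.1, hxy⟩]
    gcongr
    exact max_zero_sub_add_max_zero_sub_le hε₀ hx.1 hy.1
  · have hsub : x + y - 1 ∈ Set.Ico 0 1 := ⟨by linarith, by linarith [hx.2, hy.2]⟩
    have hshift := truncFn_add_intCast ε (x + y - 1) 1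
    rw [Int.cast_one, sub_add_cancel, truncFn_of_mem_Ico ε hsub] at hshift
    rw [hshift, div_le_iff₀ hpos, add_mul, div_mul_cancel₀ _ hpos.ne', one_mul]
    exact max_zero_sub_add_max_zero_sub_le_of_lt_one hε₁.le hx.2 hy.2

theorem stmt_3_general (ε : ℝ) (hε : ε ∈ Set.Ioo (0 : ℝ) 1) (a b : ℝ) :
    truncFn ε a + truncFn ε b ≤ truncFn ε (a + b) := by
  have hfract (s : ℝ) : Int.fract s ∈ Set.Ico 0 1 := ⟨Int.fract_nonneg s, Int.fract_lt_one s⟩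
  have hsplit (s : ℝ) : truncFn ε s = truncFn ε (Int.fract s) + ⌊s⌋ := by
    rw [← truncFn_add_intCast, Int.fract_add_floor]
  calc truncFn ε a + truncFn ε b
      = truncFn ε (Int.fract a) + truncFn ε (Int.fract b) + ((⌊a⌋ + ⌊b⌋ : ℤ) : ℝ) := by
        rw [hsplit a, hsplit b]; push_cast; ring
    _ ≤ truncFn ε (Int.fract a + Int.fract b) + ((⌊a⌋ + ⌊b⌋ : ℤ) : ℝ) := by
        gcongr; exact truncFn_add_le_of_mem_Ico hε.1.le hε.2 (hfract a) (hfract b)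
    _ = truncFn ε (a + b) := by
        rw [← truncFn_add_intCast, Int.cast_add]
        congr 1
        linarith [Int.fract_add_floor a, Int.fract_add_floor b]

/-- `σ` is superadditive on the nonnegative reals. -/
theorem stmt_3 (ε : ℝ) (hε : ε ∈ Set.Ioo (0 : ℝ) 1) (a b : ℝ) (ha : 0 ≤ a) (hb : 0 ≤ b) :
    truncFn ε a + truncFn ε b ≤ truncFn ε (a + b) :=
  stmt_3_general ε hε a b
end

section
/- Let T = (V, E) be a finite rooted tree with root r and leaf set L, with every leaf at the same combinatorial depth, and weights w : V → ℝ₊ with w_r = 0. Define dist_w as the weighted path metric on V where the edge from a vertex v to its parent has length w_v. For a leaf measure z ∈ ℝ₊^L, define its lifting ẑ ∈ ℝ₊^V by ẑ_v = Σ_{ℓ ∈ L(v)} z_ℓ, where L(v) is the set of leaves below v. Then for any two leaf measures y, z with equal total mass, the L¹-transportation distance between y and z with respect to dist_w equals Σ_{v ∈ V} w_v |ŷ_v − ẑ_v|. -/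
open Finset
open scoped Classical

variable {V : Type*} [Fintype V] [DecidableEq V]

/-- `v` is a leaf of the rooted tree given by `parent`: it has no children. -/
def IsTreeLeaf (parent : V → V) (v : V) : Prop := ∀ u, parent u = v → u = v

/-- The weighted path distance between two vertices at common depth `M`, where the
edge from a vertex `v` to its parent has length `w v`: sum the weights of all edges
on the two upward paths until they merge. -/
def treeDist (parent : V → V) (w : V → ℝ) (M : ℕ) (a b : V) : ℝ :=
  ∑ i ∈ range M,
    if parent^[i] a ≠ parent^[i] b then w (parent^[i] a) + w (parent^[i] b) else 0

/-- The lifting `ẑ` of a leaf measure `z`: `ẑ v` is the total mass of `z` on the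
leaves below `v` (within depth `M`). -/
noncomputable def lift (parent : V → V) (M : ℕ) (z : V → ℝ) (v : V) : ℝ :=
  ∑ ℓ ∈ univ.filter (fun ℓ => IsTreeLeaf parent ℓ ∧ ∃ i ≤ M, parent^[i] ℓ = v), z ℓ

set_option linter.unusedSectionVars false

noncomputable def lift' (parent : V → V) (depth : V → ℕ) (M : ℕ) (z : V → ℝ) (v : V) : ℝ :=
  ∑ ℓ ∈ univ.filter (fun ℓ => depth ℓ = M ∧ ∃ i ≤ M, parent^[i] ℓ = v), z ℓ

section Depth
variable (parent : V → V) (r : V) (depth : V → ℕ)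
variable (hroot : parent r = r) (hdepthr : depth r = 0)
  (hdepth : ∀ v, v ≠ r → depth v = depth (parent v) + 1)

include hdepthr hdepth in
lemma depth_eq_zero_iff {v : V} (h : depth v = 0) : v = r := by
  by_contra hv
  rw [hdepth v hv] at h
  omega

include hdepthr hdepth in
lemma depth_iter (a : V) : ∀ i ≤ depth a, depth (parent^[i] a) = depth a - i := by
  intro i
  induction i with
  | zero => simp
  | succ k ih =>
    intro hk
    rw [Function.iterate_succ_apply']
    have h1 : depth (parent^[k] a) = depth a - k := ih (by omega)
    by_cases hr : parent^[k] a = r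
    · rw [hr] at h1; omega
    · have := hdepth _ hr
      omega

include hroot hdepthr hdepth in
lemma depth_parent_le (v : V) : depth (parent v) ≤ depth v := by
  by_cases hv : v = r
  · subst hv; rw [hroot]
  · rw [hdepth v hv]; omega

include hroot hdepthr hdepth in
lemma depth_iter_le (a : V) (i : ℕ) : depth (parent^[i] a) ≤ depth a := by
  induction i with
  | zero => simp
  | succ k ih =>
    rw [Function.iterate_succ_apply']
    exact le_trans (depth_parent_le parent r depth hroot hdepthr hdepth _) ih

include hroot hdepthr hdepth in
lemma iter_depth_eq_root (a : V) (h : depth a ≤ 0 + depth a) :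
    parent^[depth a] a = r :=
  depth_eq_zero_iff parent r depth hdepthr hdepth
    (by rw [depth_iter parent r depth hdepthr hdepth a (depth a) le_rfl]; omega)

lemma treeDist_self (w : V → ℝ) (M : ℕ) (a : V) : treeDist parent w M a a = 0 := by
  simp [treeDist]

end Depth

noncomputable def chi (parent : V → V) (M : ℕ) (a v : V) : ℝ :=
  if ∃ i ≤ M, parent^[i] a = v then 1 else 0

section Chi
variable (parent : V → V) (r : V) (depth : V → ℕ) (w : V → ℝ) (M : ℕ)
variable (hroot : parent r = r) (hdepthr : depth r = 0)
  (hdepth : ∀ v, v ≠ r → depth v = depth (parent v) + 1)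
  (hw0 : w r = 0) (hw : ∀ v, 0 ≤ w v)

include hroot hdepthr hdepth hw0 hw in
lemma chi_l1 (a b : V) (ha : depth a = M) (hb : depth b = M) :
    ∑ v, w v * |chi parent M a v - chi parent M b v| = treeDist parent w M a b := by
  classical
  set A : Finset ℕ := (range M).filter (fun i => parent^[i] a ≠ parent^[i] b) with hA
  have hda : ∀ i ≤ M, depth (parent^[i] a) = M - i := by
    intro i hi
    rw [depth_iter parent r depth hdepthr hdepth a i (ha ▸ hi), ha]
  have hdb : ∀ i ≤ M, depth (parent^[i] b) = M - i := by
    intro i hi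
    rw [depth_iter parent r depth hdepthr hdepth b i (hb ▸ hi), hb]
  have hra : parent^[M] a = r := by
    apply depth_eq_zero_iff parent r depth hdepthr hdepth
    rw [hda M le_rfl]; omega
  have hrb : parent^[M] b = r := by
    apply depth_eq_zero_iff parent r depth hdepthr hdepth
    rw [hdb M le_rfl]; omega
  set S1 : Finset V := A.image (fun i => parent^[i] a) with hS1
  set S2 : Finset V := A.image (fun i => parent^[i] b) with hS2
  have hmem1 : ∀ v, v ∈ S1 ↔ ((∃ i ≤ M, parent^[i] a = v) ∧ ¬(∃ j ≤ M, parent^[j] b = v)) := by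
    intro v
    constructor
    · intro hv
      obtain ⟨i, hiA, hiv⟩ := mem_image.1 hv
      rw [hA, mem_filter, mem_range] at hiA
      refine ⟨⟨i, le_of_lt hiA.1, hiv⟩, ?_⟩
      rintro ⟨j, hj, hjv⟩
      have : M - i = M - j := by
        rw [← hda i (le_of_lt hiA.1), ← hdb j hj, hiv, hjv]
      have hij : i = j := by omega
      exact hiA.2 (by rw [hiv, hij, hjv])
    · rintro ⟨⟨i, hi, hiv⟩, hnb⟩
      have hiM : i < M := by
        rcases lt_or_eq_of_le hi with h | h
        · exact h
        · exfalso; exact hnb ⟨M, le_rfl, by rw [hrb, ← hra, ← h, hiv]⟩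
      have hne : parent^[i] a ≠ parent^[i] b := by
        intro hEq
        exact hnb ⟨i, hi, by rw [← hEq, hiv]⟩
      exact mem_image.2 ⟨i, by rw [hA, mem_filter, mem_range]; exact ⟨hiM, hne⟩, hiv⟩
  have hmem2 : ∀ v, v ∈ S2 ↔ ((∃ i ≤ M, parent^[i] b = v) ∧ ¬(∃ j ≤ M, parent^[j] a = v)) := by
    intro v
    constructor
    · intro hv
      obtain ⟨i, hiA, hiv⟩ := mem_image.1 hv
      rw [hA, mem_filter, mem_range] at hiA
      refine ⟨⟨i, le_of_lt hiA.1, hiv⟩, ?_⟩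
      rintro ⟨j, hj, hjv⟩
      have : M - i = M - j := by
        rw [← hdb i (le_of_lt hiA.1), ← hda j hj, hiv, hjv]
      have hij : i = j := by omega
      exact hiA.2 (by rw [hiv, hij, hjv])
    · rintro ⟨⟨i, hi, hiv⟩, hnb⟩
      have hiM : i < M := by
        rcases lt_or_eq_of_le hi with h | h
        · exact h
        · exfalso; exact hnb ⟨M, le_rfl, by rw [hra, ← hrb, ← h, hiv]⟩
      have hne : parent^[i] a ≠ parent^[i] b := by
        intro hEq
        exact hnb ⟨i, hi, by rw [hEq, hiv]⟩
      exact mem_image.2 ⟨i, by rw [hA, mem_filter, mem_range]; exact ⟨hiM, hne⟩, hiv⟩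
  have hinj_a : Set.InjOn (fun i => parent^[i] a) A := by
    intro i hi j hj hij
    rw [hA, coe_filter] at hi hj
    simp only [Set.mem_setOf_eq, mem_range] at hi hj
    have : M - i = M - j := by
      rw [← hda i (le_of_lt hi.1), ← hda j (le_of_lt hj.1)]; simp only [hij]
    omega
  have hinj_b : Set.InjOn (fun i => parent^[i] b) A := by
    intro i hi j hj hij
    rw [hA, coe_filter] at hi hj
    simp only [Set.mem_setOf_eq, mem_range] at hi hj
    have : M - i = M - j := by
      rw [← hdb i (le_of_lt hi.1), ← hdb j (le_of_lt hj.1)]; simp only [hij]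
    omega
  have hpoint : ∀ v, w v * |chi parent M a v - chi parent M b v| =
      (if v ∈ S1 then w v else 0) + (if v ∈ S2 then w v else 0) := by
    intro v
    by_cases h1 : v ∈ S1 <;> by_cases h2 : v ∈ S2
    · exact absurd ((hmem2 v).1 h2).1 ((hmem1 v).1 h1).2
    · obtain ⟨he, hne⟩ := (hmem1 v).1 h1
      rw [chi, chi, if_pos he, if_neg hne, if_pos h1, if_neg h2]
      norm_num
    · obtain ⟨he, hne⟩ := (hmem2 v).1 h2
      rw [chi, chi, if_neg hne, if_pos he, if_neg h1, if_pos h2]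
      norm_num
    · have : chi parent M a v = chi parent M b v := by
        rw [chi, chi]
        by_cases hea : ∃ i ≤ M, parent^[i] a = v <;>
          by_cases heb : ∃ i ≤ M, parent^[i] b = v
        · rw [if_pos hea, if_pos heb]
        · exact absurd ((hmem1 v).2 ⟨hea, heb⟩) h1
        · exact absurd ((hmem2 v).2 ⟨heb, hea⟩) h2
        · rw [if_neg hea, if_neg heb]
      rw [this, sub_self, abs_zero, mul_zero, if_neg h1, if_neg h2, add_zero]
  calc ∑ v, w v * |chi parent M a v - chi parent M b v|
      = ∑ v, ((if v ∈ S1 then w v else 0) + (if v ∈ S2 then w v else 0)) :=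
        Finset.sum_congr rfl (fun v _ => hpoint v)
    _ = (∑ v ∈ S1, w v) + (∑ v ∈ S2, w v) := by
        rw [Finset.sum_add_distrib]
        congr 1 <;> · rw [Finset.sum_ite_mem, univ_inter]
    _ = (∑ i ∈ A, w (parent^[i] a)) + (∑ i ∈ A, w (parent^[i] b)) := by
        rw [hS1, hS2, Finset.sum_image (fun i hi j hj h => hinj_a hi hj h),
          Finset.sum_image (fun i hi j hj h => hinj_b hi hj h)]
    _ = ∑ i ∈ A, (w (parent^[i] a) + w (parent^[i] b)) := (Finset.sum_add_distrib).symm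
    _ = treeDist parent w M a b := by
        rw [treeDist, hA, Finset.sum_filter]

end Chi

section Lower
variable (parent : V → V) (r : V) (depth : V → ℕ) (w : V → ℝ) (M : ℕ)
variable (hroot : parent r = r) (hdepthr : depth r = 0)
  (hdepth : ∀ v, v ≠ r → depth v = depth (parent v) + 1)
  (hw0 : w r = 0) (hw : ∀ v, 0 ≤ w v)

lemma lift'_eq_sum_chi (y : V → ℝ) (hysupp : ∀ v, depth v ≠ M → y v = 0) (v : V) :
    lift' parent depth M y v = ∑ ℓ, y ℓ * chi parent M ℓ v := by
  rw [lift', Finset.sum_filter]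
  refine Finset.sum_congr rfl (fun ℓ _ => ?_)
  rw [chi, mul_ite, mul_one, mul_zero]
  by_cases hyl : y ℓ = 0
  · split_ifs <;> simp [hyl]
  · have hdl : depth ℓ = M := by
      by_contra h; exact hyl (hysupp ℓ h)
    split_ifs with h1 h2 h2
    · rfl
    · exact absurd h1.2 h2
    · exact absurd ⟨hdl, h2⟩ h1
    · rfl

include hroot hdepthr hdepth hw0 hw in
lemma lower_bound (y z : V → ℝ)
    (hysupp : ∀ v, depth v ≠ M → y v = 0) (hzsupp : ∀ v, depth v ≠ M → z v = 0)
    (π : V → V → ℝ) (hπ : ∀ a b, 0 ≤ π a b)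
    (hrow : ∀ a, ∑ b, π a b = y a) (hcol : ∀ b, ∑ a, π a b = z b) :
    ∑ v, w v * |lift' parent depth M y v - lift' parent depth M z v| ≤
      ∑ a, ∑ b, π a b * treeDist parent w M a b := by
  classical
  have πsupp : ∀ a b, π a b ≠ 0 → depth a = M ∧ depth b = M := by
    intro a b h
    constructor
    · by_contra hda
      have h1 : π a b ≤ y a := by
        rw [← hrow a]
        exact Finset.single_le_sum (fun c _ => hπ a c) (mem_univ b)
      rw [hysupp a hda] at h1
      exact h (le_antisymm h1 (hπ a b))
    · by_contra hdb
      have h1 : π a b ≤ z b := by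
        rw [← hcol b]
        exact Finset.single_le_sum (fun c _ => hπ c b) (mem_univ a)
      rw [hzsupp b hdb] at h1
      exact h (le_antisymm h1 (hπ a b))
  have hdiff : ∀ v, lift' parent depth M y v - lift' parent depth M z v =
      ∑ a, ∑ b, π a b * (chi parent M a v - chi parent M b v) := by
    intro v
    rw [lift'_eq_sum_chi parent depth M y hysupp v, lift'_eq_sum_chi parent depth M z hzsupp v]
    have e1 : ∑ a, y a * chi parent M a v = ∑ a, ∑ b, π a b * chi parent M a v := by
      refine Finset.sum_congr rfl (fun a _ => ?_)
      rw [← hrow a, Finset.sum_mul]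
    have e2 : ∑ b, z b * chi parent M b v = ∑ a, ∑ b, π a b * chi parent M b v := by
      rw [Finset.sum_comm]
      refine Finset.sum_congr rfl (fun b _ => ?_)
      rw [← hcol b, Finset.sum_mul]
    rw [e1, e2, ← Finset.sum_sub_distrib]
    refine Finset.sum_congr rfl (fun a _ => ?_)
    rw [← Finset.sum_sub_distrib]
    refine Finset.sum_congr rfl (fun b _ => ?_)
    ring
  calc ∑ v, w v * |lift' parent depth M y v - lift' parent depth M z v|
      ≤ ∑ v, ∑ a, ∑ b, π a b * (w v * |chi parent M a v - chi parent M b v|) := by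
        refine Finset.sum_le_sum (fun v _ => ?_)
        rw [hdiff v]
        calc w v * |∑ a, ∑ b, π a b * (chi parent M a v - chi parent M b v)|
            ≤ w v * ∑ a, ∑ b, π a b * |chi parent M a v - chi parent M b v| := by
              refine mul_le_mul_of_nonneg_left ?_ (hw v)
              calc |∑ a, ∑ b, π a b * (chi parent M a v - chi parent M b v)|
                  ≤ ∑ a, |∑ b, π a b * (chi parent M a v - chi parent M b v)| :=
                    Finset.abs_sum_le_sum_abs _ _
                _ ≤ ∑ a, ∑ b, π a b * |chi parent M a v - chi parent M b v| := by
                    refine Finset.sum_le_sum (fun a _ => ?_)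
                    refine le_trans (Finset.abs_sum_le_sum_abs _ _) ?_
                    refine Finset.sum_le_sum (fun b _ => ?_)
                    rw [abs_mul, abs_of_nonneg (hπ a b)]
          _ = ∑ a, ∑ b, π a b * (w v * |chi parent M a v - chi parent M b v|) := by
              rw [Finset.mul_sum]
              refine Finset.sum_congr rfl (fun a _ => ?_)
              rw [Finset.mul_sum]
              refine Finset.sum_congr rfl (fun b _ => ?_)
              ring
    _ = ∑ a, ∑ b, ∑ v, π a b * (w v * |chi parent M a v - chi parent M b v|) := by
        rw [Finset.sum_comm]
        refine Finset.sum_congr rfl (fun a _ => ?_)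
        rw [Finset.sum_comm]
    _ = ∑ a, ∑ b, π a b * treeDist parent w M a b := by
        refine Finset.sum_congr rfl (fun a _ => ?_)
        refine Finset.sum_congr rfl (fun b _ => ?_)
        rw [← Finset.mul_sum]
        by_cases hab : π a b = 0
        · rw [hab, zero_mul, zero_mul]
        · obtain ⟨hda, hdb⟩ := πsupp a b hab
          rw [chi_l1 parent r depth w M hroot hdepthr hdepth hw0 hw a b hda hdb]

end Lower

section LiftLemmas
variable (parent : V → V) (r : V) (depth : V → ℕ) (M : ℕ)
variable (hroot : parent r = r) (hdepthr : depth r = 0)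
  (hdepth : ∀ v, v ≠ r → depth v = depth (parent v) + 1)

include hdepthr hdepth in
lemma lift'_at_level (q : V → ℝ) (v : V) (hv : depth v = M) :
    lift' parent depth M q v = q v := by
  rw [lift']
  have : univ.filter (fun ℓ => depth ℓ = M ∧ ∃ i ≤ M, parent^[i] ℓ = v) = {v} := by
    ext ℓ
    simp only [mem_filter, mem_univ, true_and, Finset.mem_singleton]
    constructor
    · rintro ⟨hdl, i, hi, hiv⟩
      have hd : depth (parent^[i] ℓ) = M - i :=
        hdl ▸ depth_iter parent r depth hdepthr hdepth ℓ i (by omega)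
      rw [hiv, hv] at hd
      have : i = 0 := by omega
      rw [this] at hiv
      exact hiv
    · rintro rfl
      exact ⟨hv, 0, Nat.zero_le _, rfl⟩
  rw [this, Finset.sum_singleton]

include hroot hdepthr hdepth in
lemma lift'_deep (q : V → ℝ) (v : V) (hv : M < depth v) :
    lift' parent depth M q v = 0 := by
  rw [lift']
  have : univ.filter (fun ℓ => depth ℓ = M ∧ ∃ i ≤ M, parent^[i] ℓ = v) = ∅ := by
    rw [Finset.filter_eq_empty_iff]
    rintro ℓ - ⟨hdl, i, hi, hiv⟩
    have := depth_iter_le parent r depth hroot hdepthr hdepth ℓ i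
    rw [hiv, hdl] at this
    omega
  rw [this, Finset.sum_empty]

include hroot hdepthr hdepth in
lemma lift'_step (y : V → ℝ) (hysupp : ∀ a, depth a ≠ M + 1 → y a = 0) (v : V)
    (hv : depth v ≤ M) :
    lift' parent depth (M + 1) y v =
      lift' parent depth M (fun u => ∑ a ∈ univ.filter (fun a => parent a = u), y a) v := by
  classical
  rw [lift', lift', Finset.sum_filter, Finset.sum_filter]
  have step1 : ∀ u : V,
      (if (depth u = M ∧ ∃ i ≤ M, parent^[i] u = v)
        then (∑ a ∈ univ.filter (fun a => parent a = u), y a) else 0) =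
      ∑ a ∈ univ.filter (fun a => parent a = u),
        (if (depth (parent a) = M ∧ ∃ i ≤ M, parent^[i] (parent a) = v) then y a else 0) := by
    intro u
    by_cases hc : depth u = M ∧ ∃ i ≤ M, parent^[i] u = v
    · rw [if_pos hc]
      refine Finset.sum_congr rfl (fun a ha => ?_)
      rw [mem_filter] at ha
      rw [ha.2, if_pos hc]
    · rw [if_neg hc]
      symm
      refine Finset.sum_eq_zero (fun a ha => ?_)
      rw [mem_filter] at ha
      rw [ha.2, if_neg hc]
  rw [Finset.sum_congr rfl (fun u _ => step1 u), Finset.sum_fiberwise]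
  refine Finset.sum_congr rfl (fun a _ => ?_)
  by_cases hya : y a = 0
  · split_ifs <;> simp [hya]
  · have hda : depth a = M + 1 := by
      by_contra h; exact hya (hysupp a h)
    have har : a ≠ r := by
      intro h; rw [h, hdepthr] at hda; omega
    have hdpa : depth (parent a) = M := by
      have := hdepth a har; omega
    have hiff : (depth a = M + 1 ∧ ∃ i ≤ M + 1, parent^[i] a = v) ↔
        (depth (parent a) = M ∧ ∃ i ≤ M, parent^[i] (parent a) = v) := by
      constructor
      · rintro ⟨-, i, hi, hiv⟩
        refine ⟨hdpa, ?_⟩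
        rcases Nat.eq_zero_or_pos i with h0 | hpos
        · exfalso
          rw [h0] at hiv
          simp only [Function.iterate_zero_apply] at hiv
          rw [← hiv, hda] at hv
          omega
        · have hik : i = (i - 1) + 1 := by omega
          rw [hik, Function.iterate_succ_apply] at hiv
          exact ⟨i - 1, by omega, hiv⟩
      · rintro ⟨-, j, hj, hjv⟩
        exact ⟨hda, j + 1, by omega, by rw [Function.iterate_succ_apply]; exact hjv⟩
    by_cases h1 : depth a = M + 1 ∧ ∃ i ≤ M + 1, parent^[i] a = v
    · rw [if_pos h1, if_pos (hiff.1 h1)]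
    · rw [if_neg h1, if_neg (fun h => h1 (hiff.2 h))]

end LiftLemmas

lemma treeDist_succ (parent : V → V) (w : V → ℝ) (M : ℕ) (a b : V) :
    treeDist parent w (M + 1) a b =
      (if a ≠ b then w a + w b else 0) + treeDist parent w M (parent a) (parent b) := by
  rw [treeDist, Finset.sum_range_succ']
  simp only [Function.iterate_succ_apply, Function.iterate_zero_apply]
  rw [add_comm]
  rfl

lemma abs_eq_resid (x y : ℝ) : (x - min x y) + (y - min x y) = |x - y| := by
  rcases le_total x y with h | h
  · rw [min_eq_left h, abs_of_nonpos (by linarith)]; ring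
  · rw [min_eq_right h, abs_of_nonneg (by linarith)]; ring

section Exists
variable (parent : V → V) (r : V) (depth : V → ℕ) (w : V → ℝ)
variable (hroot : parent r = r) (hdepthr : depth r = 0)
  (hdepth : ∀ v, v ≠ r → depth v = depth (parent v) + 1)
  (hw0 : w r = 0) (hw : ∀ v, 0 ≤ w v)

include hroot hdepthr hdepth hw0 hw in
lemma exists_coupling : ∀ (M : ℕ) (y z : V → ℝ),
    (∀ v, depth v ≠ M → y v = 0) → (∀ v, depth v ≠ M → z v = 0) →
    (∀ v, 0 ≤ y v) → (∀ v, 0 ≤ z v) → (∑ v, y v = ∑ v, z v) →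
    ∃ π : V → V → ℝ, (∀ a b, 0 ≤ π a b) ∧ (∀ a, ∑ b, π a b = y a) ∧
      (∀ b, ∑ a, π a b = z b) ∧ (∀ v, π v v = min (y v) (z v)) ∧
      (∑ a, ∑ b, π a b * treeDist parent w M a b) =
        ∑ v, w v * |lift' parent depth M y v - lift' parent depth M z v| := by
  intro M
  induction M with
  | zero =>
    intro y z hysupp hzsupp hy hz hmass
    have hy_supp : ∀ v, v ≠ r → y v = 0 := by
      intro v hv
      refine hysupp v (fun h => hv ?_)
      exact depth_eq_zero_iff parent r depth hdepthr hdepth h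
    have hz_supp : ∀ v, v ≠ r → z v = 0 := by
      intro v hv
      refine hzsupp v (fun h => hv ?_)
      exact depth_eq_zero_iff parent r depth hdepthr hdepth h
    have hsy : ∑ v, y v = y r :=
      Finset.sum_eq_single r (fun v _ hv => hy_supp v hv) (by simp)
    have hsz : ∑ v, z v = z r :=
      Finset.sum_eq_single r (fun v _ hv => hz_supp v hv) (by simp)
    have hyr : y r = z r := by rw [← hsy, ← hsz, hmass]
    refine ⟨fun a b => if a = r ∧ b = r then y r else 0, ?_, ?_, ?_, ?_, ?_⟩
    · intro a b
      dsimp only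
      split_ifs
      · exact hy r
      · exact le_rfl
    · intro a
      by_cases ha : a = r
      · subst ha; simp
      · simp only [ha, false_and, if_false, Finset.sum_const_zero]
        exact (hy_supp a ha).symm
    · intro b
      by_cases hb : b = r
      · subst hb; simp [hyr]
      · simp only [hb, and_false, if_false, Finset.sum_const_zero]
        exact (hz_supp b hb).symm
    · intro v
      by_cases hv : v = r
      · subst hv; simp [hyr]
      · simp only [hv, and_self, if_false, hy_supp v hv, hz_supp v hv]
        simp
    · have h1 : ∀ a b : V, treeDist parent w 0 a b = 0 := by
        intro a b; rw [treeDist]; simp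
      simp only [h1, mul_zero, Finset.sum_const_zero]
      symm
      refine Finset.sum_eq_zero (fun v _ => ?_)
      by_cases hv : v = r
      · subst hv; rw [hw0, zero_mul]
      · have hdv : 0 < depth v := by
          rcases Nat.eq_zero_or_pos (depth v) with h | h
          · exact absurd (depth_eq_zero_iff parent r depth hdepthr hdepth h) hv
          · exact h
        rw [lift'_deep parent r depth 0 hroot hdepthr hdepth y v hdv,
          lift'_deep parent r depth 0 hroot hdepthr hdepth z v hdv]
        simp
  | succ M ih =>
    intro y z hysupp hzsupp hy hz hmass
    classical
    set y₁ : V → ℝ := fun u => ∑ a ∈ univ.filter (fun a => parent a = u), y a with hy₁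
    set z₁ : V → ℝ := fun u => ∑ a ∈ univ.filter (fun a => parent a = u), z a with hz₁
    have hfib : ∀ (f : V → ℝ), ∀ u, (∀ v, depth v ≠ M + 1 → f v = 0) →
        depth u ≠ M → ∑ a ∈ univ.filter (fun a => parent a = u), f a = 0 := by
      intro f u hfsupp hu
      refine Finset.sum_eq_zero (fun a ha => ?_)
      rw [mem_filter] at ha
      by_contra hfa
      have hda : depth a = M + 1 := by
        by_contra h; exact hfa (hfsupp a h)
      have har : a ≠ r := by
        intro h; rw [h, hdepthr] at hda; omega
      have := hdepth a har
      rw [ha.2] at this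
      omega
    have hy₁supp : ∀ u, depth u ≠ M → y₁ u = 0 := fun u hu => hfib y u hysupp hu
    have hz₁supp : ∀ u, depth u ≠ M → z₁ u = 0 := fun u hu => hfib z u hzsupp hu
    have hy₁nn : ∀ u, 0 ≤ y₁ u := fun u => Finset.sum_nonneg (fun a _ => hy a)
    have hz₁nn : ∀ u, 0 ≤ z₁ u := fun u => Finset.sum_nonneg (fun a _ => hz a)
    have hmass₁ : ∑ u, y₁ u = ∑ u, z₁ u := by
      rw [hy₁, hz₁]
      rw [Finset.sum_fiberwise univ parent y, Finset.sum_fiberwise univ parent z]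
      exact hmass
    obtain ⟨π₁, hπ₁0, hπ₁r, hπ₁c, hπ₁d, hπ₁cost⟩ :=
      ih y₁ z₁ hy₁supp hz₁supp hy₁nn hz₁nn hmass₁
    set m : V → ℝ := fun a => min (y a) (z a) with hm
    set y' : V → ℝ := fun a => y a - m a with hy'
    set z' : V → ℝ := fun b => z b - m b with hz'
    set Y : V → ℝ := fun u => ∑ a ∈ univ.filter (fun a => parent a = u), y' a with hY
    set Z : V → ℝ := fun v => ∑ b ∈ univ.filter (fun b => parent b = v), z' b with hZ
    set ms : V → ℝ := fun u => ∑ a ∈ univ.filter (fun a => parent a = u), m a with hms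
    set π₁' : V → V → ℝ := fun u v => π₁ u v - if u = v then ms u else 0 with hπ₁'
    set ρ : V → V → ℝ := fun a b =>
      π₁' (parent a) (parent b) * (y' a / Y (parent a)) * (z' b / Z (parent b)) with hρ
    have hm0 : ∀ a, 0 ≤ m a := fun a => le_min (hy a) (hz a)
    have hy'0 : ∀ a, 0 ≤ y' a := fun a => sub_nonneg.2 (min_le_left _ _)
    have hz'0 : ∀ b, 0 ≤ z' b := fun b => sub_nonneg.2 (min_le_right _ _)
    have hy'z' : ∀ a, y' a = 0 ∨ z' a = 0 := by
      intro a
      rcases le_total (y a) (z a) with h | h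
      · left; rw [hy', hm]; simp [min_eq_left h]
      · right; rw [hz', hm]; simp [min_eq_right h]
    have hY0 : ∀ u, 0 ≤ Y u := fun u => Finset.sum_nonneg (fun a _ => hy'0 a)
    have hZ0 : ∀ v, 0 ≤ Z v := fun v => Finset.sum_nonneg (fun b _ => hz'0 b)
    have hYY : ∀ u, Y u = y₁ u - ms u := by
      intro u
      rw [hY, hy₁, hms]
      simp only [hy']
      rw [Finset.sum_sub_distrib]
    have hZZ : ∀ v, Z v = z₁ v - ms v := by
      intro v
      rw [hZ, hz₁, hms]
      simp only [hz']
      rw [Finset.sum_sub_distrib]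
    have hmsle : ∀ u, ms u ≤ y₁ u ∧ ms u ≤ z₁ u := by
      intro u
      constructor
      · exact Finset.sum_le_sum (fun a _ => min_le_left _ _)
      · exact Finset.sum_le_sum (fun a _ => min_le_right _ _)
    have hπ₁'0 : ∀ u v, 0 ≤ π₁' u v := by
      intro u v
      simp only [hπ₁']
      by_cases huv : u = v
      · subst huv
        rw [if_pos rfl, sub_nonneg, hπ₁d u]
        exact le_min (hmsle u).1 (hmsle u).2
      · rw [if_neg huv, sub_zero]
        exact hπ₁0 u v
    have hπ₁'r : ∀ u, ∑ v, π₁' u v = Y u := by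
      intro u
      rw [hπ₁']
      simp only []
      rw [Finset.sum_sub_distrib, hπ₁r u, Finset.sum_ite_eq, if_pos (mem_univ u), hYY u]
    have hπ₁'c : ∀ v, ∑ u, π₁' u v = Z v := by
      intro v
      rw [hπ₁']
      simp only []
      rw [Finset.sum_sub_distrib, hπ₁c v, Finset.sum_ite_eq', if_pos (mem_univ v), hZZ v]
    have hYzero : ∀ u, Y u = 0 → ∀ v, π₁' u v = 0 := by
      intro u hu v
      have h1 : π₁' u v ≤ Y u := by
        rw [← hπ₁'r u]
        exact Finset.single_le_sum (fun c _ => hπ₁'0 u c) (mem_univ v)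
      exact le_antisymm (hu ▸ h1) (hπ₁'0 u v)
    have hZzero : ∀ v, Z v = 0 → ∀ u, π₁' u v = 0 := by
      intro v hv u
      have h1 : π₁' u v ≤ Z v := by
        rw [← hπ₁'c v]
        exact Finset.single_le_sum (fun c _ => hπ₁'0 c v) (mem_univ u)
      exact le_antisymm (hv ▸ h1) (hπ₁'0 u v)
    have hYzero' : ∀ u, Y u = 0 → ∀ a, parent a = u → y' a = 0 := by
      intro u hu a ha
      have := (Finset.sum_eq_zero_iff_of_nonneg (fun b (_ : b ∈ univ.filter
        (fun b => parent b = u)) => hy'0 b)).1 hu a (by rw [mem_filter]; exact ⟨mem_univ a, ha⟩)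
      exact this
    have hZzero' : ∀ v, Z v = 0 → ∀ b, parent b = v → z' b = 0 := by
      intro v hv b hb
      exact (Finset.sum_eq_zero_iff_of_nonneg (fun c (_ : c ∈ univ.filter
        (fun c => parent c = v)) => hz'0 c)).1 hv b (by rw [mem_filter]; exact ⟨mem_univ b, hb⟩)
    have hzfrac : ∀ v, (∑ b ∈ univ.filter (fun b => parent b = v), z' b / Z (parent b)) =
        if Z v = 0 then 0 else 1 := by
      intro v
      have e1 : ∀ b ∈ univ.filter (fun b => parent b = v), z' b / Z (parent b) = z' b / Z v := by
        intro b hb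
        rw [mem_filter] at hb
        rw [hb.2]
      rw [Finset.sum_congr rfl e1, ← Finset.sum_div]
      change Z v / Z v = _
      by_cases hZv : Z v = 0
      · rw [if_pos hZv, hZv, div_zero]
      · rw [if_neg hZv, div_self hZv]
    have hyfrac : ∀ u, (∑ a ∈ univ.filter (fun a => parent a = u), y' a / Y (parent a)) =
        if Y u = 0 then 0 else 1 := by
      intro u
      have e1 : ∀ a ∈ univ.filter (fun a => parent a = u), y' a / Y (parent a) = y' a / Y u := by
        intro a ha
        rw [mem_filter] at ha
        rw [ha.2]
      rw [Finset.sum_congr rfl e1, ← Finset.sum_div]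
      change Y u / Y u = _
      by_cases hYu : Y u = 0
      · rw [if_pos hYu, hYu, div_zero]
      · rw [if_neg hYu, div_self hYu]
    have hρ0 : ∀ a b, 0 ≤ ρ a b := by
      intro a b
      rw [hρ]
      exact mul_nonneg (mul_nonneg (hπ₁'0 _ _) (div_nonneg (hy'0 a) (hY0 _)))
        (div_nonneg (hz'0 b) (hZ0 _))
    have hρinner : ∀ (a : V) (v : V), (∑ b ∈ univ.filter (fun b => parent b = v), ρ a b) =
        π₁' (parent a) v * (y' a / Y (parent a)) := by
      intro a v
      have e1 : ∀ b ∈ univ.filter (fun b => parent b = v), ρ a b =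
          (π₁' (parent a) v * (y' a / Y (parent a))) * (z' b / Z (parent b)) := by
        intro b hb
        rw [mem_filter] at hb
        rw [hρ]
        simp only []
        rw [hb.2]
      rw [Finset.sum_congr rfl e1, ← Finset.mul_sum, hzfrac v]
      by_cases hZv : Z v = 0
      · rw [if_pos hZv, mul_zero, hZzero v hZv, zero_mul]
      · rw [if_neg hZv, mul_one]
    have hρrow : ∀ a, ∑ b, ρ a b = y' a := by
      intro a
      rw [← Finset.sum_fiberwise univ parent (ρ a)]
      rw [Finset.sum_congr rfl (fun v _ => hρinner a v)]
      by_cases hYu : Y (parent a) = 0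
      · have h0 : y' a = 0 := hYzero' _ hYu a rfl
        rw [h0]
        simp
      · rw [← Finset.sum_mul, hπ₁'r, mul_comm, div_mul_cancel₀ _ hYu]
    have hρinner' : ∀ (b : V) (u : V), (∑ a ∈ univ.filter (fun a => parent a = u), ρ a b) =
        π₁' u (parent b) * (z' b / Z (parent b)) := by
      intro b u
      have e1 : ∀ a ∈ univ.filter (fun a => parent a = u), ρ a b =
          (π₁' u (parent b) * (z' b / Z (parent b))) * (y' a / Y (parent a)) := by
        intro a ha
        rw [mem_filter] at ha
        rw [hρ]
        simp only []
        rw [ha.2]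
        ring
      rw [Finset.sum_congr rfl e1, ← Finset.mul_sum, hyfrac u]
      by_cases hYu : Y u = 0
      · rw [if_pos hYu, mul_zero, hYzero u hYu, zero_mul]
      · rw [if_neg hYu, mul_one]
    have hρcol : ∀ b, ∑ a, ρ a b = z' b := by
      intro b
      rw [← Finset.sum_fiberwise univ parent (fun a => ρ a b)]
      rw [Finset.sum_congr rfl (fun u _ => hρinner' b u)]
      by_cases hZv : Z (parent b) = 0
      · have h0 : z' b = 0 := hZzero' _ hZv b rfl
        rw [h0]
        simp
      · rw [← Finset.sum_mul, hπ₁'c, mul_comm, div_mul_cancel₀ _ hZv]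
    have hρfib : ∀ u v, (∑ a ∈ univ.filter (fun a => parent a = u),
        ∑ b ∈ univ.filter (fun b => parent b = v), ρ a b) = π₁' u v := by
      intro u v
      have e1 : ∀ a ∈ univ.filter (fun a => parent a = u),
          (∑ b ∈ univ.filter (fun b => parent b = v), ρ a b) =
            (π₁' u v) * (y' a / Y (parent a)) := by
        intro a ha
        rw [mem_filter] at ha
        rw [hρinner a v, ha.2]
      rw [Finset.sum_congr rfl e1, ← Finset.mul_sum, hyfrac u]
      by_cases hYu : Y u = 0
      · rw [if_pos hYu, mul_zero, hYzero u hYu]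
      · rw [if_neg hYu, mul_one]
    have hρdiag : ∀ a, ρ a a = 0 := by
      intro a
      rcases hy'z' a with h | h
      · rw [hρ]; simp [h]
      · rw [hρ]; simp [h]
    refine ⟨fun a b => (if a = b then m a else 0) + ρ a b, ?_, ?_, ?_, ?_, ?_⟩
    · intro a b
      dsimp only
      have h1 := hρ0 a b
      split_ifs with h
      · have := hm0 a; linarith
      · linarith
    · intro a
      dsimp only
      rw [Finset.sum_add_distrib, hρrow a, Finset.sum_ite_eq, if_pos (mem_univ a)]
      simp only [hy']
      ring
    · intro b
      dsimp only
      rw [Finset.sum_add_distrib, hρcol b, Finset.sum_ite_eq', if_pos (mem_univ b)]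
      simp only [hz']
      ring
    · intro v
      dsimp only
      rw [if_pos rfl, hρdiag v, add_zero]
    · dsimp only
      have hdiagcost : ∑ a, ∑ b, (if a = b then m a else 0) * treeDist parent w (M + 1) a b
          = 0 := by
        refine Finset.sum_eq_zero (fun a _ => Finset.sum_eq_zero (fun b _ => ?_))
        split_ifs with h
        · subst h; rw [treeDist_self, mul_zero]
        · rw [zero_mul]
      have hA : ∑ a, ∑ b, ρ a b * (if a ≠ b then w a + w b else 0) =
          ∑ v, w v * (y' v + z' v) := by
        have e : ∀ a b : V, ρ a b * (if a ≠ b then w a + w b else 0) =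
            ρ a b * w a + ρ a b * w b := by
          intro a b
          by_cases h : a = b
          · subst h; rw [hρdiag a]; simp
          · rw [if_pos h]; ring
        calc ∑ a, ∑ b, ρ a b * (if a ≠ b then w a + w b else 0)
            = (∑ a, ∑ b, ρ a b * w a) + ∑ a, ∑ b, ρ a b * w b := by
              simp only [e, Finset.sum_add_distrib]
          _ = (∑ a, y' a * w a) + ∑ b, z' b * w b := by
              congr 1
              · refine Finset.sum_congr rfl (fun a _ => ?_)
                rw [← Finset.sum_mul, hρrow a]
              · rw [Finset.sum_comm]
                refine Finset.sum_congr rfl (fun b _ => ?_)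
                rw [← Finset.sum_mul, hρcol b]
          _ = ∑ v, w v * (y' v + z' v) := by
              rw [← Finset.sum_add_distrib]
              refine Finset.sum_congr rfl (fun v _ => ?_)
              ring
      have hB : ∑ a, ∑ b, ρ a b * treeDist parent w M (parent a) (parent b)
          = ∑ u, ∑ v, π₁' u v * treeDist parent w M u v := by
        rw [← Finset.sum_fiberwise univ parent
          (fun a => ∑ b, ρ a b * treeDist parent w M (parent a) (parent b))]
        refine Finset.sum_congr rfl (fun u _ => ?_)
        have e1 : ∀ a ∈ univ.filter (fun a => parent a = u),
            (∑ b, ρ a b * treeDist parent w M (parent a) (parent b)) =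
            ∑ v, (∑ b ∈ univ.filter (fun b => parent b = v),
              ρ a b * treeDist parent w M u v) := by
          intro a ha
          rw [mem_filter] at ha
          rw [← Finset.sum_fiberwise univ parent
            (fun b => ρ a b * treeDist parent w M (parent a) (parent b))]
          refine Finset.sum_congr rfl (fun v _ => ?_)
          refine Finset.sum_congr rfl (fun b hb => ?_)
          rw [mem_filter] at hb
          rw [ha.2, hb.2]
        rw [Finset.sum_congr rfl e1, Finset.sum_comm]
        refine Finset.sum_congr rfl (fun v _ => ?_)
        have e2 : ∀ a ∈ univ.filter (fun a => parent a = u),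
            (∑ b ∈ univ.filter (fun b => parent b = v), ρ a b * treeDist parent w M u v) =
            (∑ b ∈ univ.filter (fun b => parent b = v), ρ a b) * treeDist parent w M u v := by
          intro a _
          rw [Finset.sum_mul]
        rw [Finset.sum_congr rfl e2, ← Finset.sum_mul, hρfib u v]
      have hπ₁'cost : ∑ u, ∑ v, π₁' u v * treeDist parent w M u v =
          ∑ u, ∑ v, π₁ u v * treeDist parent w M u v := by
        refine Finset.sum_congr rfl (fun u _ => Finset.sum_congr rfl (fun v _ => ?_))
        simp only [hπ₁']
        by_cases huv : u = v
        · subst huv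
          rw [treeDist_self, mul_zero, mul_zero]
        · rw [if_neg huv, sub_zero]
      have hRHS : (∑ v, w v * (y' v + z' v)) +
          (∑ v, w v * |lift' parent depth M y₁ v - lift' parent depth M z₁ v|) =
          ∑ v, w v * |lift' parent depth (M + 1) y v - lift' parent depth (M + 1) z v| := by
        rw [← Finset.sum_add_distrib]
        refine Finset.sum_congr rfl (fun v _ => ?_)
        rcases lt_trichotomy (depth v) (M + 1) with hv | hv | hv
        · have hy0v : y v = 0 := hysupp v (by omega)
          have hz0v : z v = 0 := hzsupp v (by omega)
          have h1 : y' v + z' v = 0 := by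
            simp [hy', hz', hm, hy0v, hz0v]
          rw [lift'_step parent r depth M hroot hdepthr hdepth y hysupp v (by omega),
            lift'_step parent r depth M hroot hdepthr hdepth z hzsupp v (by omega),
            ← hy₁, ← hz₁, h1, mul_zero, zero_add]
        · rw [lift'_at_level parent r depth (M + 1) hdepthr hdepth y v hv,
            lift'_at_level parent r depth (M + 1) hdepthr hdepth z v hv,
            lift'_deep parent r depth M hroot hdepthr hdepth y₁ v (by omega),
            lift'_deep parent r depth M hroot hdepthr hdepth z₁ v (by omega),
            sub_zero, abs_zero, mul_zero, add_zero]
          rw [hy', hz', hm]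
          simp only []
          rw [abs_eq_resid]
        · rw [lift'_deep parent r depth (M + 1) hroot hdepthr hdepth y v hv,
            lift'_deep parent r depth (M + 1) hroot hdepthr hdepth z v hv,
            lift'_deep parent r depth M hroot hdepthr hdepth y₁ v (by omega),
            lift'_deep parent r depth M hroot hdepthr hdepth z₁ v (by omega)]
          have hy0v : y v = 0 := hysupp v (by omega)
          have hz0v : z v = 0 := hzsupp v (by omega)
          have h1 : y' v + z' v = 0 := by
            simp [hy', hz', hm, hy0v, hz0v]
          rw [h1]
          simp
      have hsplit1 : ∀ a b : V,
          ((if a = b then m a else 0) + ρ a b) * treeDist parent w (M + 1) a b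
          = (if a = b then m a else 0) * treeDist parent w (M + 1) a b
            + (ρ a b * (if a ≠ b then w a + w b else 0)
            + ρ a b * treeDist parent w M (parent a) (parent b)) := by
        intro a b
        rw [treeDist_succ]
        ring
      calc ∑ a, ∑ b, ((if a = b then m a else 0) + ρ a b) * treeDist parent w (M + 1) a b
          = (∑ a, ∑ b, (if a = b then m a else 0) * treeDist parent w (M + 1) a b)
            + ((∑ a, ∑ b, ρ a b * (if a ≠ b then w a + w b else 0))
              + ∑ a, ∑ b, ρ a b * treeDist parent w M (parent a) (parent b)) := by
            simp only [hsplit1, Finset.sum_add_distrib]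
        _ = 0 + ((∑ v, w v * (y' v + z' v))
              + ∑ v, w v * |lift' parent depth M y₁ v - lift' parent depth M z₁ v|) := by
            rw [hdiagcost, hA, hB, hπ₁'cost, hπ₁cost]
        _ = ∑ v, w v * |lift' parent depth (M + 1) y v - lift' parent depth (M + 1) z v| := by
            rw [zero_add, hRHS]

end Exists

/-- On a weighted rooted tree with all leaves at depth `M`, the `L¹`-transportation
distance between two leaf measures `y, z` of equal mass equals
`Σ_v w_v |ŷ_v - ẑ_v|`: this quantity is the least cost of any coupling of `y` and `z`. -/
theorem stmt_8 (parent : V → V) (r : V) (depth : V → ℕ) (M : ℕ) (w : V → ℝ)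
    (hroot : parent r = r) (hdepthr : depth r = 0)
    (hdepth : ∀ v, v ≠ r → depth v = depth (parent v) + 1)
    (hleafdepth : ∀ v, IsTreeLeaf parent v → depth v = M)
    (hw0 : w r = 0) (hw : ∀ v, 0 ≤ w v)
    (y z : V → ℝ)
    (hy0 : ∀ v, ¬IsTreeLeaf parent v → y v = 0) (hz0 : ∀ v, ¬IsTreeLeaf parent v → z v = 0)
    (hy : ∀ v, 0 ≤ y v) (hz : ∀ v, 0 ≤ z v)
    (hmass : ∑ v, y v = ∑ v, z v) :
    IsLeast
      {c : ℝ | ∃ π : V → V → ℝ, (∀ a b, 0 ≤ π a b) ∧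
        (∀ a, ∑ b, π a b = y a) ∧ (∀ b, ∑ a, π a b = z b) ∧
        c = ∑ a, ∑ b, π a b * treeDist parent w M a b}
      (∑ v, w v * |lift parent M y v - lift parent M z v|) := by
  classical
  have hysupp : ∀ v, depth v ≠ M → y v = 0 := by
    intro v hv
    refine hy0 v (fun hl => hv (hleafdepth v hl))
  have hzsupp : ∀ v, depth v ≠ M → z v = 0 := by
    intro v hv
    refine hz0 v (fun hl => hv (hleafdepth v hl))
  have hlift_eq : ∀ (q : V → ℝ), (∀ v, ¬IsTreeLeaf parent v → q v = 0) → ∀ v,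
      lift parent M q v = lift' parent depth M q v := by
    intro q hq0 v
    rw [lift, lift', Finset.sum_filter, Finset.sum_filter]
    refine Finset.sum_congr rfl (fun ℓ _ => ?_)
    by_cases hql : q ℓ = 0
    · split_ifs <;> simp [hql]
    · have hl : IsTreeLeaf parent ℓ := by
        by_contra h; exact hql (hq0 ℓ h)
      have hd : depth ℓ = M := hleafdepth ℓ hl
      split_ifs with h1 h2 h2
      · rfl
      · exact absurd ⟨hd, h1.2⟩ h2
      · exact absurd ⟨hl, h2.2⟩ h1
      · rfl
  have htarget : ∑ v, w v * |lift parent M y v - lift parent M z v| =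
      ∑ v, w v * |lift' parent depth M y v - lift' parent depth M z v| := by
    refine Finset.sum_congr rfl (fun v _ => ?_)
    rw [hlift_eq y hy0 v, hlift_eq z hz0 v]
  constructor
  · obtain ⟨π, hπ0, hπr, hπc, _, hπcost⟩ :=
      exists_coupling parent r depth w hroot hdepthr hdepth hw0 hw M y z
        hysupp hzsupp hy hz hmass
    exact ⟨π, hπ0, hπr, hπc, by rw [htarget, ← hπcost]⟩
  · rintro c ⟨π, hπ0, hπr, hπc, rfl⟩
    rw [htarget]
    exact lower_bound parent r depth w M hroot hdepthr hdepth hw0 hw y z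
      hysupp hzsupp π hπ0 hπr hπc
end

section
/- Let k ≥ 2, τ > 1, j ∈ ℤ, and μ the truncated exponential on [0, τ^{-j-1}] with density (k τ^{j+1} log k)/(k−1) exp(−r τ^{j+1} log k). Let c = (1 − 1/log k) τ^{-j-1}. Then for every R ∈ [0, c) and d ≥ 0, the conditional probability μ([R, R+d]) / μ([R, τ^{-j-1}]) is at most 2 d τ^{j+1} log k. -/
/-!
Write `L = τ^{j+1} log k` and `T = τ^{-j-1}`; the normalising constant of the density cancels in
the ratio. Since `e^{-rL}` is decreasing, the numerator is at most `d e^{-RL}`. The denominator is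
`(e^{-RL} - e^{-TL}) / L`, and `c` is chosen so that `(T - c) L = 1`; hence for `R < c` the tail
`e^{-TL}` is at most `e^{-1} ≤ 1/2` of `e^{-RL}`, and the denominator is at least `e^{-RL} / (2L)`.
-/

open Real MeasureTheory Set

theorem integral_Icc_exp_neg_mul {a b L : ℝ} (hab : a ≤ b) (hL : L ≠ 0) :
    ∫ r in Icc a b, exp (-(r * L)) = (exp (-(a * L)) - exp (-(b * L))) / L := by
  rw [integral_Icc_eq_integral_Ioc, ← intervalIntegral.integral_of_le hab,
    intervalIntegral.integral_comp_mul_right (fun y => exp (-y)) hL,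
    intervalIntegral.integral_comp_neg, integral_exp]
  simp [div_eq_inv_mul]

theorem setIntegral_Icc_inter_exp_neg_mul_le {R d L : ℝ} (s : Set ℝ) (hd : 0 ≤ d) (hL : 0 ≤ L) :
    ∫ r in Icc R (R + d) ∩ s, exp (-(r * L)) ≤ d * exp (-(R * L)) := by
  have hbound : ∀ r ∈ Icc R (R + d) ∩ s, ‖exp (-(r * L))‖ ≤ exp (-(R * L)) := by
    rintro r ⟨⟨hRr, -⟩, -⟩
    rw [Real.norm_of_nonneg (exp_pos _).le, exp_le_exp]
    nlinarith
  have hvol : volume.real (Icc R (R + d) ∩ s) ≤ d := by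
    calc volume.real (Icc R (R + d) ∩ s) ≤ volume.real (Icc R (R + d)) :=
          measureReal_mono inter_subset_left measure_Icc_lt_top.ne
      _ = d := by simp [hd]
  calc ∫ r in Icc R (R + d) ∩ s, exp (-(r * L))
      ≤ exp (-(R * L)) * volume.real (Icc R (R + d) ∩ s) :=
        (le_abs_self _).trans (norm_setIntegral_le_of_norm_le_const
          ((measure_mono inter_subset_left).trans_lt measure_Icc_lt_top) hbound)
    _ ≤ d * exp (-(R * L)) := by
        rw [mul_comm]; exact mul_le_mul_of_nonneg_right hvol (exp_pos _).le

theorem exp_neg_mul_div_two_mul_le_integral_Icc {R T L : ℝ} (hL : 0 < L)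
    (hRT : 1 ≤ (T - R) * L) :
    exp (-(R * L)) / (2 * L) ≤ ∫ r in Icc R T, exp (-(r * L)) := by
  have hRT_le : R ≤ T := by nlinarith
  rw [integral_Icc_exp_neg_mul hRT_le hL.ne']
  have htail : exp (-(T * L)) ≤ exp (-(R * L)) / 2 := by
    have hsplit : exp (-(T * L)) = exp (-(R * L)) * exp (-((T - R) * L)) := by
      rw [← exp_add]; ring_nf
    have hhalf : exp (-((T - R) * L)) ≤ 1 / 2 := by
      calc exp (-((T - R) * L)) ≤ exp (-1) := exp_le_exp.mpr (by linarith)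
        _ ≤ 1 / 2 := by
          rw [exp_neg, inv_le_comm₀ (exp_pos 1) (by norm_num)]
          linarith [add_one_le_exp (1 : ℝ)]
    rw [hsplit]
    linarith [mul_le_mul_of_nonneg_left hhalf (exp_pos (-(R * L))).le]
  rw [div_le_div_iff₀ (by positivity) hL]
  nlinarith

theorem setIntegral_exp_neg_mul_ratio_le {R T d L : ℝ} (s : Set ℝ) (hd : 0 ≤ d) (hL : 0 < L)
    (hRT : 1 ≤ (T - R) * L) :
    (∫ r in Icc R (R + d) ∩ s, exp (-(r * L))) / ∫ r in Icc R T, exp (-(r * L)) ≤ 2 * d * L := by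
  have hlower := exp_neg_mul_div_two_mul_le_integral_Icc hL hRT
  have hpos : 0 < ∫ r in Icc R T, exp (-(r * L)) :=
    lt_of_lt_of_le (div_pos (exp_pos _) (by positivity)) hlower
  rw [div_le_iff₀ hpos]
  calc ∫ r in Icc R (R + d) ∩ s, exp (-(r * L))
      ≤ d * exp (-(R * L)) := setIntegral_Icc_inter_exp_neg_mul_le s hd hL.le
    _ = 2 * d * L * (exp (-(R * L)) / (2 * L)) := by field_simp
    _ ≤ 2 * d * L * ∫ r in Icc R T, exp (-(r * L)) := by gcongr

/-- Conditional-probability bound for the truncated exponential distribution: for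
`c = (1 - 1/log k) τ^{-j-1}`, every `R ∈ [0, c)` and `d ≥ 0`,
`μ([R, R+d]) / μ([R, τ^{-j-1}]) ≤ 2 d τ^{j+1} log k`. -/
theorem stmt_12 (k : ℕ) (hk : 2 ≤ k) (τ : ℝ) (hτ : 1 < τ) (j : ℤ)
    (c R d : ℝ) (hc : c = (1 - 1 / Real.log k) * τ ^ (-(j + 1)))
    (hR : R ∈ Set.Ico (0 : ℝ) c) (hd : 0 ≤ d) :
    (∫ r in Set.Icc R (R + d) ∩ Set.Icc 0 (τ ^ (-(j + 1))),
        (k * τ ^ (j + 1) * Real.log k / (k - 1)) * Real.exp (-(r * τ ^ (j + 1) * Real.log k))) /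
      (∫ r in Set.Icc R (τ ^ (-(j + 1))),
        (k * τ ^ (j + 1) * Real.log k / (k - 1)) * Real.exp (-(r * τ ^ (j + 1) * Real.log k)))
      ≤ 2 * d * τ ^ (j + 1) * Real.log k := by
  have hk1 : (1 : ℝ) < k := by exact_mod_cast hk
  have hlog : 0 < log k := log_pos hk1
  set L := τ ^ (j + 1) * log k with hL_def
  have hL : 0 < L := mul_pos (zpow_pos (zero_lt_one.trans hτ) _) hlog
  have hTL : τ ^ (-(j + 1)) * L = log k := by
    rw [hL_def, ← mul_assoc, ← zpow_add₀ (zero_lt_one.trans hτ).ne', neg_add_cancel, zpow_zero,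
      one_mul]
  have hRT : 1 ≤ (τ ^ (-(j + 1)) - R) * L := by
    have hcT : (τ ^ (-(j + 1)) - c) * L = 1 := by
      rw [hc, show (τ ^ (-(j + 1)) - (1 - 1 / log k) * τ ^ (-(j + 1))) * L
        = τ ^ (-(j + 1)) * L / log k by ring, hTL, div_self hlog.ne']
    nlinarith [hR.2]
  have hexp : ∀ r : ℝ, r * τ ^ (j + 1) * log k = r * L := fun r => mul_assoc _ _ _
  simp_rw [hexp]
  have hC : 0 < k * L / (k - 1) := div_pos (by positivity) (by linarith)
  rw [integral_const_mul, integral_const_mul, mul_div_mul_left _ _ hC.ne']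
  exact setIntegral_exp_neg_mul_ratio_le _ hd hL hRT
end

section
/- Let z_u, z_v, z_{v'}, ε > 0 satisfy z_u ≥ z_v + z_{v'} and z_u ≥ ε. Then log((z_u + ε)/(z_v + ε)) + log((z_u + ε)/(z_{v'} + ε)) ≥ log(4/3). -/
/-- Key inequality for the fractional server-weighted depth potential: if
`z_u ≥ z_v + z_{v'}` and `z_u ≥ ε > 0`, then
`log((z_u+ε)/(z_v+ε)) + log((z_u+ε)/(z_{v'}+ε)) ≥ log(4/3)`. -/
theorem stmt_19 (zu zv zv' ε : ℝ) (hzu : 0 < zu) (hzv : 0 < zv) (hzv' : 0 < zv')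
    (hε : 0 < ε) (hsum : zv + zv' ≤ zu) (huε : ε ≤ zu) :
    Real.log (4 / 3) ≤
      Real.log ((zu + ε) / (zv + ε)) + Real.log ((zu + ε) / (zv' + ε)) := by
  have h1 : (0:ℝ) < zv + ε := by linarith
  have h2 : (0:ℝ) < zv' + ε := by linarith
  have h3 : (0:ℝ) < zu + ε := by linarith
  rw [← Real.log_mul (by positivity) (by positivity)]
  apply Real.log_le_log (by norm_num)
  rw [div_mul_div_comm, le_div_iff₀ (by positivity)]
  nlinarith [sq_nonneg (zv - zv'), sq_nonneg (zu - ε), mul_pos hε hε]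
end
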